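/- arXiv:1312.7360 — 2 statements merged into one kernel-verified Lean document; each statement's English description precedes it below -/
import Mathlib

section
/- Let n≥2, λ>0, γ≥0, σ>0, α>0. Let J be the n×n all-ones matrix, I the n×n identity, A=ασ²·I, and let M be the 2n×2n block matrix M = [[0, I],[(1/λ)(A − (1/(n+1))JA), (γ/λ)(I − (2/(n+1))J)]]. Let 𝟏∈ℝⁿ be the all-ones vector. Then: (i) for each choice of sign, the vector (𝟏, ρ±𝟏)∈ℝ^{2n} is an eigenvector of M with eigenvalue ρ±; (ii) for each choice of sign and every nonzero v∈ℝⁿ with v⊥𝟏, the vector (v, θ±v)∈ℝ^{2n} is an eigenvector of M with eigenvalue θ±; (iii) these eigenvectors span ℝ^{2n}, so M is diagonalizable and every real eigenvalue of M belongs to {θ₊, θ₋, ρ₊, ρ₋}. -/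
open Matrix

noncomputable def thetaHat (lam gam sig al : ℝ) : ℝ :=
  Real.sqrt (gam ^ 2 + 4 * al * sig ^ 2 * lam) / (2 * lam)

noncomputable def rhoHat (n : ℕ) (lam gam sig al : ℝ) : ℝ :=
  Real.sqrt (((n : ℝ) - 1) ^ 2 * gam ^ 2 + 4 * ((n : ℝ) + 1) * al * sig ^ 2 * lam)
    / (2 * ((n : ℝ) + 1) * lam)

noncomputable def thetaPlus (lam gam sig al : ℝ) : ℝ :=
  gam / (2 * lam) + thetaHat lam gam sig al

noncomputable def thetaMinus (lam gam sig al : ℝ) : ℝ :=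
  gam / (2 * lam) - thetaHat lam gam sig al

noncomputable def rhoPlus (n : ℕ) (lam gam sig al : ℝ) : ℝ :=
  -(((n : ℝ) - 1) * gam) / (2 * ((n : ℝ) + 1) * lam) + rhoHat n lam gam sig al

noncomputable def rhoMinus (n : ℕ) (lam gam sig al : ℝ) : ℝ :=
  -(((n : ℝ) - 1) * gam) / (2 * ((n : ℝ) + 1) * lam) - rhoHat n lam gam sig al

/-- The n×n all-ones matrix `J`. -/
def Jmat (n : ℕ) : Matrix (Fin n) (Fin n) ℝ := Matrix.of fun _ _ => 1

/-- The diagonal matrix `A = ασ²·I`. -/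
noncomputable def Amat (n : ℕ) (sig al : ℝ) : Matrix (Fin n) (Fin n) ℝ :=
  (al * sig ^ 2) • 1

/-- The 2n×2n block matrix
`M = [[0, I],[(1/λ)(A − (1/(n+1))JA), (γ/λ)(I − (2/(n+1))J)]]`. -/
noncomputable def Mmat (n : ℕ) (lam gam sig al : ℝ) :
    Matrix (Fin n ⊕ Fin n) (Fin n ⊕ Fin n) ℝ :=
  Matrix.fromBlocks 0 1
    ((1 / lam) • (Amat n sig al - (1 / ((n : ℝ) + 1)) • (Jmat n * Amat n sig al)))
    ((gam / lam) • (1 - (2 / ((n : ℝ) + 1)) • Jmat n))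

/- ### Auxiliary lemmas -/

lemma cancel_ne_zero (c x : ℝ) (hc : c ≠ 0) (h : c * x = 0) : x = 0 := by
  rcases mul_eq_zero.1 h with h' | h'
  · exact absurd h' hc
  · exact h'

section quad
variable (n : ℕ) (lam gam sig al : ℝ)

lemma theta_sq (hlam : 0 < lam) (hsig : 0 < sig) (hal : 0 < al) :
    Real.sqrt (gam ^ 2 + 4 * al * sig ^ 2 * lam) ^ 2 = gam ^ 2 + 4 * al * sig ^ 2 * lam :=
  Real.sq_sqrt (by nlinarith [sq_nonneg gam, mul_pos (mul_pos hal (pow_pos hsig 2)) hlam])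

lemma rho_sq (hlam : 0 < lam) (hsig : 0 < sig) (hal : 0 < al) :
    Real.sqrt (((n : ℝ) - 1) ^ 2 * gam ^ 2 + 4 * ((n : ℝ) + 1) * al * sig ^ 2 * lam) ^ 2
      = ((n : ℝ) - 1) ^ 2 * gam ^ 2 + 4 * ((n : ℝ) + 1) * al * sig ^ 2 * lam := by
  have hn1 : (0:ℝ) < (n : ℝ) + 1 := by positivity
  have hd : (0:ℝ) ≤ ((n : ℝ) - 1) ^ 2 * gam ^ 2 + 4 * ((n : ℝ) + 1) * al * sig ^ 2 * lam := by
    nlinarith [sq_nonneg (((n:ℝ)-1)*gam), mul_pos (mul_pos (mul_pos hn1 hal) (pow_pos hsig 2)) hlam]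
  exact Real.sq_sqrt hd

lemma theta_quad (hlam : 0 < lam) (hsig : 0 < sig) (hal : 0 < al) (t : ℝ)
    (ht : t = thetaPlus lam gam sig al ∨ t = thetaMinus lam gam sig al) :
    lam * t ^ 2 - gam * t - al * sig ^ 2 = 0 := by
  have hs := theta_sq lam gam sig al hlam hsig hal
  set s := Real.sqrt (gam ^ 2 + 4 * al * sig ^ 2 * lam) with hsdef
  have hl2 : (2 : ℝ) * lam ≠ 0 := by positivity
  have key : (2 * lam * t - gam) ^ 2 = gam ^ 2 + 4 * al * sig ^ 2 * lam := by
    rcases ht with h | h <;> subst h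
    · have htc : 2 * lam * thetaPlus lam gam sig al = gam + s := by
        simp only [thetaPlus, thetaHat, ← hsdef]
        field_simp
      linear_combination (2 * lam * thetaPlus lam gam sig al - gam + s) * htc + hs
    · have htc : 2 * lam * thetaMinus lam gam sig al = gam - s := by
        simp only [thetaMinus, thetaHat, ← hsdef]
        field_simp
      linear_combination (2 * lam * thetaMinus lam gam sig al - gam - s) * htc + hs
  have h4 : 4 * lam * (lam * t ^ 2 - gam * t - al * sig ^ 2) = 0 := by
    linear_combination key
  exact cancel_ne_zero _ _ (by positivity) h4

lemma rho_quad (hlam : 0 < lam) (hsig : 0 < sig) (hal : 0 < al) (t : ℝ)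
    (ht : t = rhoPlus n lam gam sig al ∨ t = rhoMinus n lam gam sig al) :
    ((n : ℝ) + 1) * lam * t ^ 2 + ((n : ℝ) - 1) * gam * t - al * sig ^ 2 = 0 := by
  have hs := rho_sq n lam gam sig al hlam hsig hal
  set s := Real.sqrt (((n : ℝ) - 1) ^ 2 * gam ^ 2 + 4 * ((n : ℝ) + 1) * al * sig ^ 2 * lam)
    with hsdef
  have hn1 : (0:ℝ) < (n : ℝ) + 1 := by positivity
  have hl2 : (2 : ℝ) * ((n : ℝ) + 1) * lam ≠ 0 := by positivity
  have key : (2 * ((n : ℝ) + 1) * lam * t + ((n : ℝ) - 1) * gam) ^ 2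
      = ((n : ℝ) - 1) ^ 2 * gam ^ 2 + 4 * ((n : ℝ) + 1) * al * sig ^ 2 * lam := by
    rcases ht with h | h <;> subst h
    · have htc : 2 * ((n : ℝ) + 1) * lam * rhoPlus n lam gam sig al
          = -(((n : ℝ) - 1) * gam) + s := by
        simp only [rhoPlus, rhoHat, ← hsdef]
        field_simp
      linear_combination (2 * ((n : ℝ) + 1) * lam * rhoPlus n lam gam sig al
        + ((n : ℝ) - 1) * gam + s) * htc + hs
    · have htc : 2 * ((n : ℝ) + 1) * lam * rhoMinus n lam gam sig al
          = -(((n : ℝ) - 1) * gam) - s := by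
        simp only [rhoMinus, rhoHat, ← hsdef]
        field_simp
      linear_combination (2 * ((n : ℝ) + 1) * lam * rhoMinus n lam gam sig al
        + ((n : ℝ) - 1) * gam - s) * htc + hs
  have h4 : 4 * ((n : ℝ) + 1) * lam
      * (((n : ℝ) + 1) * lam * t ^ 2 + ((n : ℝ) - 1) * gam * t - al * sig ^ 2) = 0 := by
    linear_combination key
  exact cancel_ne_zero _ _ (by positivity) h4

lemma theta_roots (hlam : 0 < lam) (hsig : 0 < sig) (hal : 0 < al) (t : ℝ)
    (ht : lam * t ^ 2 - gam * t - al * sig ^ 2 = 0) :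
    t = thetaPlus lam gam sig al ∨ t = thetaMinus lam gam sig al := by
  have h1 : Real.sqrt (gam ^ 2 + 4 * al * sig ^ 2 * lam) = |2 * lam * t - gam| := by
    rw [show gam ^ 2 + 4 * al * sig ^ 2 * lam = (2 * lam * t - gam) ^ 2 by
      linear_combination (-(4 * lam)) * ht, Real.sqrt_sq_eq_abs]
  rcases abs_cases (2 * lam * t - gam) with ⟨h2, _⟩ | ⟨h2, _⟩
  · left
    simp only [thetaPlus, thetaHat, h1, h2]
    field_simp
    ring
  · right
    simp only [thetaMinus, thetaHat, h1, h2]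
    field_simp
    ring

lemma rho_roots (hlam : 0 < lam) (hsig : 0 < sig) (hal : 0 < al) (t : ℝ)
    (ht : ((n : ℝ) + 1) * lam * t ^ 2 + ((n : ℝ) - 1) * gam * t - al * sig ^ 2 = 0) :
    t = rhoPlus n lam gam sig al ∨ t = rhoMinus n lam gam sig al := by
  have hn1 : (0:ℝ) < (n : ℝ) + 1 := by positivity
  have h1 : Real.sqrt (((n : ℝ) - 1) ^ 2 * gam ^ 2 + 4 * ((n : ℝ) + 1) * al * sig ^ 2 * lam)
      = |2 * ((n : ℝ) + 1) * lam * t + ((n : ℝ) - 1) * gam| := by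
    rw [show ((n : ℝ) - 1) ^ 2 * gam ^ 2 + 4 * ((n : ℝ) + 1) * al * sig ^ 2 * lam
        = (2 * ((n : ℝ) + 1) * lam * t + ((n : ℝ) - 1) * gam) ^ 2 by
      linear_combination (-(4 * ((n : ℝ) + 1) * lam)) * ht,
      Real.sqrt_sq_eq_abs]
  rcases abs_cases (2 * ((n : ℝ) + 1) * lam * t + ((n : ℝ) - 1) * gam) with ⟨h2, _⟩ | ⟨h2, _⟩
  · left
    simp only [rhoPlus, rhoHat, h1, h2]
    field_simp
    ring
  · right
    simp only [rhoMinus, rhoHat, h1, h2]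
    field_simp
    ring

lemma thetaHat_pos (hlam : 0 < lam) (hsig : 0 < sig) (hal : 0 < al) :
    0 < thetaHat lam gam sig al := by
  have h : 0 < gam ^ 2 + 4 * al * sig ^ 2 * lam := by
    nlinarith [sq_nonneg gam, mul_pos (mul_pos hal (pow_pos hsig 2)) hlam]
  exact div_pos (Real.sqrt_pos.2 h) (by positivity)

lemma rhoHat_pos (hlam : 0 < lam) (hsig : 0 < sig) (hal : 0 < al) :
    0 < rhoHat n lam gam sig al := by
  have hn1 : (0:ℝ) < (n : ℝ) + 1 := by positivity
  have h : 0 < ((n : ℝ) - 1) ^ 2 * gam ^ 2 + 4 * ((n : ℝ) + 1) * al * sig ^ 2 * lam := by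
    nlinarith [sq_nonneg (((n:ℝ)-1)*gam),
      mul_pos (mul_pos (mul_pos hn1 hal) (pow_pos hsig 2)) hlam]
  exact div_pos (Real.sqrt_pos.2 h) (by positivity)

lemma Mmat_mulVec (x y : Fin n → ℝ) :
    (Mmat n lam gam sig al).mulVec (Sum.elim x y) =
      Sum.elim y (fun i =>
        (1 / lam) * (al * sig ^ 2 * x i - 1 / ((n : ℝ) + 1) * (al * sig ^ 2 * ∑ j, x j))
        + gam / lam * (y i - 2 / ((n : ℝ) + 1) * ∑ j, y j)) := by
  have hA : (Amat n sig al).mulVec x = fun i => al * sig ^ 2 * x i := by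
    funext i; simp [Amat, smul_mulVec, one_mulVec]
  have hJA : (Jmat n * Amat n sig al).mulVec x = fun _ => al * sig ^ 2 * ∑ j, x j := by
    rw [← mulVec_mulVec, hA]
    funext i
    simp [Jmat, mulVec, dotProduct, Finset.mul_sum]
  have hJ : (Jmat n).mulVec y = fun _ => ∑ j, y j := by
    funext i; simp [Jmat, mulVec, dotProduct]
  rw [Mmat, fromBlocks_mulVec]
  funext i
  cases i with
  | inl i => simp [Sum.elim_comp_inl, Sum.elim_comp_inr, zero_mulVec, one_mulVec]
  | inr i =>
    simp only [Sum.elim_comp_inl, Sum.elim_comp_inr, Sum.elim_inr, Pi.add_apply,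
      smul_mulVec, sub_mulVec, Pi.smul_apply, Pi.sub_apply, hA, hJA, hJ,
      one_mulVec, smul_eq_mul]

lemma eig_const_mulVec (hlam : 0 < lam) (t : ℝ)
    (ht : ((n : ℝ) + 1) * lam * t ^ 2 + ((n : ℝ) - 1) * gam * t - al * sig ^ 2 = 0) :
    (Mmat n lam gam sig al).mulVec (Sum.elim (fun _ => (1:ℝ)) (fun _ => t))
      = t • Sum.elim (fun _ => (1:ℝ)) (fun _ => t) := by
  rw [Mmat_mulVec]
  funext i
  cases i with
  | inl i => simp
  | inr i =>
    have hn1 : ((n:ℝ) + 1) ≠ 0 := by positivity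
    simp only [Sum.elim_inr, Pi.smul_apply, smul_eq_mul, Finset.sum_const,
      Finset.card_univ, Fintype.card_fin, nsmul_eq_mul, mul_one]
    field_simp
    linear_combination (-1 : ℝ) * ht

lemma eig_perp_mulVec (hlam : 0 < lam) (t : ℝ)
    (ht : lam * t ^ 2 - gam * t - al * sig ^ 2 = 0)
    (v : Fin n → ℝ) (hv : (∑ j, v j) = 0) :
    (Mmat n lam gam sig al).mulVec (Sum.elim v (t • v))
      = t • Sum.elim v (t • v) := by
  rw [Mmat_mulVec]
  have hsv : (∑ j, t * v j) = 0 := by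
    rw [← Finset.mul_sum, hv, mul_zero]
  funext i
  cases i with
  | inl i => simp
  | inr i =>
    have hn1 : ((n:ℝ) + 1) ≠ 0 := by positivity
    simp only [Sum.elim_inr, Pi.smul_apply, smul_eq_mul, hv, hsv, mul_zero, sub_zero]
    field_simp
    linear_combination (-(v i)) * ht

end quad

/-- eigenstructure of the matrix `M`: `(𝟏, ρ±𝟏)` are
eigenvectors with eigenvalues `ρ±`; `(v, θ±v)` with `v ⊥ 𝟏`, `v ≠ 0`, are
eigenvectors with eigenvalues `θ±`; these eigenvectors span `ℝ^{2n}`, `M` is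
diagonalizable, and every real eigenvalue of `M` is one of `θ₊,θ₋,ρ₊,ρ₋`. -/
theorem stmt_13 (n : ℕ) (hn : 2 ≤ n) (lam gam sig al : ℝ)
    (hlam : 0 < lam) (hgam : 0 ≤ gam) (hsig : 0 < sig) (hal : 0 < al) :
    ((Mmat n lam gam sig al).mulVec
        (Sum.elim (fun _ => 1) (fun _ => rhoPlus n lam gam sig al))
      = rhoPlus n lam gam sig al •
        Sum.elim (fun _ => 1) (fun _ => rhoPlus n lam gam sig al)) ∧
    ((Mmat n lam gam sig al).mulVec
        (Sum.elim (fun _ => 1) (fun _ => rhoMinus n lam gam sig al))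
      = rhoMinus n lam gam sig al •
        Sum.elim (fun _ => 1) (fun _ => rhoMinus n lam gam sig al)) ∧
    (∀ v : Fin n → ℝ, v ≠ 0 → (∑ j, v j) = 0 →
      (Mmat n lam gam sig al).mulVec (Sum.elim v (thetaPlus lam gam sig al • v))
        = thetaPlus lam gam sig al • Sum.elim v (thetaPlus lam gam sig al • v) ∧
      (Mmat n lam gam sig al).mulVec (Sum.elim v (thetaMinus lam gam sig al • v))
        = thetaMinus lam gam sig al • Sum.elim v (thetaMinus lam gam sig al • v)) ∧
    Submodule.span ℝ
      ({w : Fin n ⊕ Fin n → ℝ |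
        (w = Sum.elim (fun _ => 1) (fun _ => rhoPlus n lam gam sig al)) ∨
        (w = Sum.elim (fun _ => 1) (fun _ => rhoMinus n lam gam sig al)) ∨
        (∃ v : Fin n → ℝ, v ≠ 0 ∧ (∑ j, v j) = 0 ∧
          (w = Sum.elim v (thetaPlus lam gam sig al • v) ∨
           w = Sum.elim v (thetaMinus lam gam sig al • v)))}) = ⊤ ∧
    (⨆ μ : ℝ, Module.End.eigenspace
      (Matrix.toLin' (Mmat n lam gam sig al)) μ) = ⊤ ∧
    (∀ μ : ℝ, Module.End.HasEigenvalue (Matrix.toLin' (Mmat n lam gam sig al)) μ →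
      μ = thetaPlus lam gam sig al ∨ μ = thetaMinus lam gam sig al ∨
      μ = rhoPlus n lam gam sig al ∨ μ = rhoMinus n lam gam sig al) := by
  have hn2 : (2:ℝ) ≤ (n:ℝ) := by exact_mod_cast hn
  have hn0 : (n:ℝ) ≠ 0 := by linarith
  have hn1 : ((n:ℝ) + 1) ≠ 0 := by positivity
  have hρP := rho_quad n lam gam sig al hlam hsig hal _ (Or.inl rfl)
  have hρM := rho_quad n lam gam sig al hlam hsig hal _ (Or.inr rfl)
  have hθP := theta_quad lam gam sig al hlam hsig hal _ (Or.inl rfl)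
  have hθM := theta_quad lam gam sig al hlam hsig hal _ (Or.inr rfl)
  have hθne : thetaPlus lam gam sig al ≠ thetaMinus lam gam sig al := by
    have h := thetaHat_pos lam gam sig al hlam hsig hal
    simp only [thetaPlus, thetaMinus]
    intro h'
    have : thetaHat lam gam sig al = -thetaHat lam gam sig al := by linarith [add_left_cancel h']
    linarith
  have hρne : rhoPlus n lam gam sig al ≠ rhoMinus n lam gam sig al := by
    have h := rhoHat_pos n lam gam sig al hlam hsig hal
    simp only [rhoPlus, rhoMinus]
    intro h'
    have : rhoHat n lam gam sig al = -rhoHat n lam gam sig al := by linarith [add_left_cancel h']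
    linarith
  -- the spanning set
  set S : Set (Fin n ⊕ Fin n → ℝ) :=
      {w : Fin n ⊕ Fin n → ℝ |
        (w = Sum.elim (fun _ => 1) (fun _ : Fin n => rhoPlus n lam gam sig al)) ∨
        (w = Sum.elim (fun _ => 1) (fun _ : Fin n => rhoMinus n lam gam sig al)) ∨
        (∃ v : Fin n → ℝ, v ≠ 0 ∧ (∑ j, v j) = 0 ∧
          (w = Sum.elim v (thetaPlus lam gam sig al • v) ∨
           w = Sum.elim v (thetaMinus lam gam sig al • v)))} with hSdef
  have hwP : Sum.elim (fun _ : Fin n => (1:ℝ)) (fun _ : Fin n => rhoPlus n lam gam sig al)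
      ∈ Submodule.span ℝ S := Submodule.subset_span (Or.inl rfl)
  have hwM : Sum.elim (fun _ : Fin n => (1:ℝ)) (fun _ : Fin n => rhoMinus n lam gam sig al)
      ∈ Submodule.span ℝ S := Submodule.subset_span (Or.inr (Or.inl rfl))
  have hf : Sum.elim (0 : Fin n → ℝ) (fun _ : Fin n => (1:ℝ)) ∈ Submodule.span ℝ S := by
    have hkey : Sum.elim (0 : Fin n → ℝ) (fun _ : Fin n => (1:ℝ))
        = (rhoPlus n lam gam sig al - rhoMinus n lam gam sig al)⁻¹ •
          (Sum.elim (fun _ : Fin n => (1:ℝ)) (fun _ : Fin n => rhoPlus n lam gam sig al)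
            - Sum.elim (fun _ : Fin n => (1:ℝ)) (fun _ : Fin n => rhoMinus n lam gam sig al)) := by
      have hne := sub_ne_zero.2 hρne
      funext i
      cases i with
      | inl i => simp
      | inr i =>
        simp only [Sum.elim_inr, Pi.smul_apply, Pi.sub_apply, smul_eq_mul]
        field_simp
    rw [hkey]
    exact Submodule.smul_mem _ _ (Submodule.sub_mem _ hwP hwM)
  have he : Sum.elim (fun _ : Fin n => (1:ℝ)) (0 : Fin n → ℝ) ∈ Submodule.span ℝ S := by
    have hkey : Sum.elim (fun _ : Fin n => (1:ℝ)) (0 : Fin n → ℝ)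
        = Sum.elim (fun _ : Fin n => (1:ℝ)) (fun _ : Fin n => rhoPlus n lam gam sig al)
          - rhoPlus n lam gam sig al • Sum.elim (0 : Fin n → ℝ) (fun _ : Fin n => (1:ℝ)) := by
      funext i
      cases i with
      | inl i => simp
      | inr i => simp
    rw [hkey]
    exact Submodule.sub_mem _ hwP (Submodule.smul_mem _ _ hf)
  have hv0 : ∀ v : Fin n → ℝ, (∑ j, v j) = 0 →
      Sum.elim v (0 : Fin n → ℝ) ∈ Submodule.span ℝ S ∧
      Sum.elim (0 : Fin n → ℝ) v ∈ Submodule.span ℝ S := by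
    intro v hsum
    by_cases hvz : v = 0
    · subst hvz
      have h0 : Sum.elim (0 : Fin n → ℝ) (0 : Fin n → ℝ) = (0 : Fin n ⊕ Fin n → ℝ) := by
        funext i; cases i <;> simp
      rw [h0]
      exact ⟨Submodule.zero_mem _, Submodule.zero_mem _⟩
    · have hP : Sum.elim v (thetaPlus lam gam sig al • v) ∈ Submodule.span ℝ S :=
        Submodule.subset_span (Or.inr (Or.inr ⟨v, hvz, hsum, Or.inl rfl⟩))
      have hM : Sum.elim v (thetaMinus lam gam sig al • v) ∈ Submodule.span ℝ S :=
        Submodule.subset_span (Or.inr (Or.inr ⟨v, hvz, hsum, Or.inr rfl⟩))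
      have h2 : Sum.elim (0 : Fin n → ℝ) v
          = (thetaPlus lam gam sig al - thetaMinus lam gam sig al)⁻¹ •
            (Sum.elim v (thetaPlus lam gam sig al • v)
              - Sum.elim v (thetaMinus lam gam sig al • v)) := by
        have hne := sub_ne_zero.2 hθne
        funext i
        cases i with
        | inl i => simp
        | inr i =>
          simp only [Sum.elim_inr, Pi.smul_apply, Pi.sub_apply, smul_eq_mul]
          field_simp
      have h2mem : Sum.elim (0 : Fin n → ℝ) v ∈ Submodule.span ℝ S := by
        rw [h2]; exact Submodule.smul_mem _ _ (Submodule.sub_mem _ hP hM)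
      have h1 : Sum.elim v (0 : Fin n → ℝ)
          = Sum.elim v (thetaPlus lam gam sig al • v)
            - thetaPlus lam gam sig al • Sum.elim (0 : Fin n → ℝ) v := by
        funext i
        cases i with
        | inl i => simp
        | inr i => simp
      exact ⟨by rw [h1]; exact Submodule.sub_mem _ hP (Submodule.smul_mem _ _ h2mem), h2mem⟩
  have hspan : Submodule.span ℝ S = ⊤ := by
    rw [eq_top_iff]
    rintro z -
    set a := (∑ j, z (Sum.inl j)) / n with ha
    set b := (∑ j, z (Sum.inr j)) / n with hb
    set v : Fin n → ℝ := fun j => z (Sum.inl j) - a with hvdef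
    set w : Fin n → ℝ := fun j => z (Sum.inr j) - b with hwdef
    have hva : (∑ j, v j) = 0 := by
      simp only [hvdef, Finset.sum_sub_distrib, Finset.sum_const, Finset.card_univ,
        Fintype.card_fin, nsmul_eq_mul, ha]
      field_simp
      ring
    have hwa : (∑ j, w j) = 0 := by
      simp only [hwdef, Finset.sum_sub_distrib, Finset.sum_const, Finset.card_univ,
        Fintype.card_fin, nsmul_eq_mul, hb]
      field_simp
      ring
    have hz : z = a • Sum.elim (fun _ : Fin n => (1:ℝ)) (0 : Fin n → ℝ)
        + b • Sum.elim (0 : Fin n → ℝ) (fun _ : Fin n => (1:ℝ))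
        + Sum.elim v (0 : Fin n → ℝ) + Sum.elim (0 : Fin n → ℝ) w := by
      funext i
      cases i with
      | inl i => simp [hvdef]
      | inr i => simp [hwdef]
    rw [hz]
    exact Submodule.add_mem _
      (Submodule.add_mem _
        (Submodule.add_mem _ (Submodule.smul_mem _ _ he) (Submodule.smul_mem _ _ hf))
        (hv0 v hva).1)
      (hv0 w hwa).2
  refine ⟨eig_const_mulVec n lam gam sig al hlam _ hρP,
    eig_const_mulVec n lam gam sig al hlam _ hρM,
    fun v _ hsum => ⟨eig_perp_mulVec n lam gam sig al hlam _ hθP v hsum,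
      eig_perp_mulVec n lam gam sig al hlam _ hθM v hsum⟩,
    hspan, ?_, ?_⟩
  · -- diagonalizability
    rw [eq_top_iff, ← hspan]
    rw [Submodule.span_le]
    rintro w (rfl | rfl | ⟨v, hv, hsum, (rfl | rfl)⟩)
    · exact Submodule.mem_iSup_of_mem (rhoPlus n lam gam sig al)
        (Module.End.mem_eigenspace_iff.2 (by
          rw [Matrix.toLin'_apply]
          exact eig_const_mulVec n lam gam sig al hlam _ hρP))
    · exact Submodule.mem_iSup_of_mem (rhoMinus n lam gam sig al)
        (Module.End.mem_eigenspace_iff.2 (by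
          rw [Matrix.toLin'_apply]
          exact eig_const_mulVec n lam gam sig al hlam _ hρM))
    · exact Submodule.mem_iSup_of_mem (thetaPlus lam gam sig al)
        (Module.End.mem_eigenspace_iff.2 (by
          rw [Matrix.toLin'_apply]
          exact eig_perp_mulVec n lam gam sig al hlam _ hθP v hsum))
    · exact Submodule.mem_iSup_of_mem (thetaMinus lam gam sig al)
        (Module.End.mem_eigenspace_iff.2 (by
          rw [Matrix.toLin'_apply]
          exact eig_perp_mulVec n lam gam sig al hlam _ hθM v hsum))
  · -- eigenvalues are among the four
    intro μ hμ
    obtain ⟨x, hx⟩ := hμ.exists_hasEigenvector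
    have hx0 : x ≠ 0 := hx.right
    have happ : (Mmat n lam gam sig al).mulVec x = μ • x := by
      have h := Module.End.mem_eigenspace_iff.1 hx.left
      rwa [Matrix.toLin'_apply] at h
    set x1 : Fin n → ℝ := fun i => x (Sum.inl i) with hx1
    set x2 : Fin n → ℝ := fun i => x (Sum.inr i) with hx2
    have hxe : x = Sum.elim x1 x2 := by funext i; cases i <;> rfl
    rw [hxe, Mmat_mulVec] at happ
    have htop : ∀ i, x2 i = μ * x1 i := by
      intro i
      have h := congrFun happ (Sum.inl i)
      simpa using h
    have hbot : ∀ i : Fin n,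
        (1 / lam) * (al * sig ^ 2 * x1 i - 1 / ((n : ℝ) + 1) * (al * sig ^ 2 * ∑ j, x1 j))
          + gam / lam * (x2 i - 2 / ((n : ℝ) + 1) * ∑ j, x2 j) = μ * x2 i := by
      intro i
      have h := congrFun happ (Sum.inr i)
      simpa using h
    have hs2 : (∑ j, x2 j) = μ * ∑ j, x1 j := by
      rw [Finset.mul_sum]
      exact Finset.sum_congr rfl fun j _ => htop j
    have key : ∀ i, (al * sig ^ 2 + gam * μ - lam * μ ^ 2) * (((n:ℝ) + 1) * x1 i)
        = (al * sig ^ 2 + 2 * gam * μ) * ∑ j, x1 j := by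
      intro i
      have h := hbot i
      rw [htop i, hs2] at h
      field_simp at h
      linear_combination h
    by_cases hS : (∑ j, x1 j) = 0
    · -- theta case
      have hx1ne : x1 ≠ 0 := by
        intro h0
        apply hx0
        rw [hxe]
        funext i
        cases i with
        | inl i => simp [h0]
        | inr i => simp [htop i, h0]
      obtain ⟨i, hi⟩ : ∃ i, x1 i ≠ 0 := by
        by_contra hc
        push_neg at hc
        exact hx1ne (funext hc)
      have hk := key i
      rw [hS, mul_zero] at hk
      have hq : lam * μ ^ 2 - gam * μ - al * sig ^ 2 = 0 := by
        rcases mul_eq_zero.1 hk with h' | h'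
        · linarith
        · rcases mul_eq_zero.1 h' with h'' | h''
          · exact absurd h'' hn1
          · exact absurd h'' hi
      rcases theta_roots lam gam sig al hlam hsig hal μ hq with h | h
      · exact Or.inl h
      · exact Or.inr (Or.inl h)
    · -- rho case
      have hsumkey : (al * sig ^ 2 + gam * μ - lam * μ ^ 2) * (((n:ℝ) + 1) * ∑ j, x1 j)
          = (n : ℝ) * ((al * sig ^ 2 + 2 * gam * μ) * ∑ j, x1 j) := by
        have h := Finset.sum_congr rfl (fun i (_ : i ∈ Finset.univ) => key i)
        simp only [Finset.sum_const, Finset.card_univ, Fintype.card_fin, nsmul_eq_mul] at h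
        rw [← h, ← Finset.mul_sum, ← Finset.mul_sum]
      have hfac : ((((n:ℝ) + 1) * (al * sig ^ 2 + gam * μ - lam * μ ^ 2)
          - (n : ℝ) * (al * sig ^ 2 + 2 * gam * μ)) * (∑ j, x1 j)) = 0 := by
        linear_combination hsumkey
      have hq : ((n : ℝ) + 1) * lam * μ ^ 2 + ((n : ℝ) - 1) * gam * μ - al * sig ^ 2 = 0 := by
        rcases mul_eq_zero.1 hfac with h' | h'
        · linarith
        · exact absurd h' hS
      rcases rho_roots n lam gam sig al hlam hsig hal μ hq with h | h
      · exact Or.inr (Or.inr (Or.inl h))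
      · exact Or.inr (Or.inr (Or.inr h))
end

section
/- Let n≥2, λ>0, γ>0, σ>0, α>0, and consider initial positions x₁,…,xₙ with Σ_{j=1}ⁿ xⱼ>0 and xᵢ=0 for some index i. Let Xᵢ*(t) = (xᵢ−x̄ₙ)e^{θ₋t} + x̄ₙe^{ρ₋t} = x̄ₙ(e^{ρ₋t} − e^{θ₋t}) with x̄ₙ = (1/n)·Σ_{j=1}ⁿ xⱼ. Then: Xᵢ*(t)>0 for all t>0 if and only if ασ²λ > 2γ²; Xᵢ*(t)<0 for all t>0 if and only if ασ²λ < 2γ²; and Xᵢ*≡0 if and only if ασ²λ = 2γ². Equivalently, ρ₋ − θ₋ has the same sign as ασ²λ − 2γ². -/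
open Set

/-- The infinite-horizon equilibrium strategy
`Xᵢ*(t) = (xᵢ − x̄ₙ)e^{θ₋t} + x̄ₙe^{ρ₋t}`. -/
noncomputable def XstarInf (n : ℕ) (lam gam sig al : ℝ) (x : Fin n → ℝ)
    (i : Fin n) (t : ℝ) : ℝ :=
  (x i - (1 / (n : ℝ)) * ∑ j, x j) * Real.exp (thetaMinus lam gam sig al * t)
    + ((1 / (n : ℝ)) * ∑ j, x j) * Real.exp (rhoMinus n lam gam sig al * t)


set_option maxHeartbeats 1000000 in
lemma key_tri (m gam A : ℝ) (hm : 2 ≤ m) (hgam : 0 < gam) (hA : 0 < A)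
    (s r : ℝ) (hs0 : 0 ≤ s) (hr0 : 0 ≤ r)
    (hs2 : s ^ 2 = gam ^ 2 + 4 * A)
    (hr2 : r ^ 2 = (m - 1) ^ 2 * gam ^ 2 + 4 * (m + 1) * A) :
    (2 * gam ^ 2 < A → 0 < (m + 1) * s - 2 * m * gam - r) ∧
    (A = 2 * gam ^ 2 → (m + 1) * s - 2 * m * gam - r = 0) ∧
    (A < 2 * gam ^ 2 → (m + 1) * s - 2 * m * gam - r < 0) := by
  have hm0 : (0:ℝ) < m := by linarith
  have hid : ((m + 1) * A - (m - 1) * gam ^ 2 - gam * r)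
      * ((m + 1) * A - (m - 1) * gam ^ 2 + gam * r)
      = (m + 1) ^ 2 * A * (A - 2 * gam ^ 2) := by
    linear_combination (-(gam ^ 2)) * hr2
  have hid2 : ((m + 1) * s - (2 * m * gam + r)) * ((m + 1) * s + (2 * m * gam + r))
      = 4 * m * ((m + 1) * A - (m - 1) * gam ^ 2 - gam * r) := by
    linear_combination ((m + 1) ^ 2) * hs2 - hr2
  have hrpos : 0 < r := by nlinarith [sq_nonneg r]
  have hspos : 0 < s := by nlinarith [sq_nonneg s]
  have hgr : 0 < gam * r := mul_pos hgam hrpos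
  have hsum2 : 0 < (m + 1) * s + (2 * m * gam + r) := by nlinarith
  refine ⟨?_, ?_, ?_⟩
  · intro h
    have hR : 0 < (m + 1) * A - (m - 1) * gam ^ 2 := by nlinarith
    have hPgt : 0 < (m + 1) ^ 2 * A * (A - 2 * gam ^ 2) :=
      mul_pos (mul_pos (by positivity) hA) (by linarith)
    have hsumR : 0 < (m + 1) * A - (m - 1) * gam ^ 2 + gam * r := by linarith
    have h2 : 0 < (m + 1) * A - (m - 1) * gam ^ 2 - gam * r := by
      nlinarith [hid, hPgt, hsumR]
    nlinarith [hid2, hsum2, mul_pos hm0 h2]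
  · intro h
    have hs3 : s = 3 * gam := by
      have h0 : (s - 3 * gam) * (s + 3 * gam) = 0 := by
        linear_combination hs2 + 4 * h
      rcases mul_eq_zero.1 h0 with h1 | h1
      · linarith
      · linarith
    have hr3 : r = (m + 3) * gam := by
      have h0 : (r - (m + 3) * gam) * (r + (m + 3) * gam) = 0 := by
        linear_combination hr2 + 4 * (m + 1) * h
      rcases mul_eq_zero.1 h0 with h1 | h1
      · linarith
      · nlinarith
    rw [hs3, hr3]; ring
  · intro h
    have hPgt : 0 < (m + 1) ^ 2 * A * (2 * gam ^ 2 - A) :=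
      mul_pos (mul_pos (by positivity) hA) (by linarith)
    have h2 : 0 < gam * r - ((m + 1) * A - (m - 1) * gam ^ 2) := by
      rcases le_or_gt ((m + 1) * A - (m - 1) * gam ^ 2) 0 with h' | h'
      · linarith
      · nlinarith [hid, hPgt, h', hgr]
    have hprod : ((m + 1) * s - (2 * m * gam + r)) * ((m + 1) * s + (2 * m * gam + r)) < 0 := by
      rw [hid2]; linarith [mul_pos hm0 h2]
    by_contra h3
    push_neg at h3
    have h4 : 0 ≤ ((m + 1) * s - (2 * m * gam + r)) := by linarith
    have := mul_nonneg h4 hsum2.le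
    linarith

/-- an agent with zero initial position provides liquidity
(`Xᵢ* > 0` on `(0,∞)`) iff `ασ²λ > 2γ²`, trades in a predatory way
(`Xᵢ* < 0` on `(0,∞)`) iff `ασ²λ < 2γ²`, and does not trade at all iff
`ασ²λ = 2γ²`; equivalently `ρ₋ − θ₋` has the same sign as `ασ²λ − 2γ²`. -/
theorem stmt_16 (n : ℕ) (hn : 2 ≤ n) (lam gam sig al : ℝ)
    (hlam : 0 < lam) (hgam : 0 < gam) (hsig : 0 < sig) (hal : 0 < al)
    (x : Fin n → ℝ) (hsum : 0 < ∑ j, x j) (i : Fin n) (hxi : x i = 0) :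
    ((∀ t : ℝ, 0 < t → 0 < XstarInf n lam gam sig al x i t) ↔
      2 * gam ^ 2 < al * sig ^ 2 * lam) ∧
    ((∀ t : ℝ, 0 < t → XstarInf n lam gam sig al x i t < 0) ↔
      al * sig ^ 2 * lam < 2 * gam ^ 2) ∧
    ((∀ t : ℝ, 0 ≤ t → XstarInf n lam gam sig al x i t = 0) ↔
      al * sig ^ 2 * lam = 2 * gam ^ 2) ∧
    Real.sign (rhoMinus n lam gam sig al - thetaMinus lam gam sig al)
      = Real.sign (al * sig ^ 2 * lam - 2 * gam ^ 2) := by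
  have hm : (2:ℝ) ≤ (n:ℝ) := by exact_mod_cast hn
  have hnpos : (0:ℝ) < (n:ℝ) := by linarith
  have hA : 0 < al * sig ^ 2 * lam := by positivity
  set s : ℝ := Real.sqrt (gam ^ 2 + 4 * al * sig ^ 2 * lam) with hs
  set r : ℝ := Real.sqrt (((n : ℝ) - 1) ^ 2 * gam ^ 2 + 4 * ((n : ℝ) + 1) * al * sig ^ 2 * lam)
    with hr
  have hs2 : s ^ 2 = gam ^ 2 + 4 * (al * sig ^ 2 * lam) := by
    rw [hs, Real.sq_sqrt (by positivity)]; ring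
  have hr2 : r ^ 2 = ((n:ℝ) - 1) ^ 2 * gam ^ 2 + 4 * ((n:ℝ) + 1) * (al * sig ^ 2 * lam) := by
    rw [hr, Real.sq_sqrt (by nlinarith)]; ring
  have hs0 : 0 ≤ s := Real.sqrt_nonneg _
  have hr0 : 0 ≤ r := Real.sqrt_nonneg _
  obtain ⟨kGT, kEQ, kLT⟩ := key_tri (n:ℝ) gam (al * sig ^ 2 * lam) hm hgam hA s r hs0 hr0 hs2 hr2
  have hden : (0:ℝ) < 2 * ((n:ℝ) + 1) * lam := by positivity
  have hdiff : rhoMinus n lam gam sig al - thetaMinus lam gam sig al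
      = (((n:ℝ) + 1) * s - 2 * (n:ℝ) * gam - r) / (2 * ((n:ℝ) + 1) * lam) := by
    unfold rhoMinus thetaMinus rhoHat thetaHat
    rw [← hs, ← hr]
    field_simp
    ring
  have hxbar : 0 < (1 / (n:ℝ)) * ∑ j, x j := by positivity
  have hX : ∀ t : ℝ, XstarInf n lam gam sig al x i t
      = ((1 / (n:ℝ)) * ∑ j, x j)
        * (Real.exp (rhoMinus n lam gam sig al * t) - Real.exp (thetaMinus lam gam sig al * t)) := by
    intro t
    unfold XstarInf
    rw [hxi]
    ring
  rcases lt_trichotomy (al * sig ^ 2 * lam) (2 * gam ^ 2) with hc | hc | hc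
  · -- predatory case
    have hD : ((n:ℝ) + 1) * s - 2 * (n:ℝ) * gam - r < 0 := kLT hc
    have hrt : rhoMinus n lam gam sig al < thetaMinus lam gam sig al := by
      have : rhoMinus n lam gam sig al - thetaMinus lam gam sig al < 0 := by
        rw [hdiff]; exact div_neg_of_neg_of_pos hD hden
      linarith
    have hXneg : ∀ t : ℝ, 0 < t → XstarInf n lam gam sig al x i t < 0 := by
      intro t ht
      rw [hX t]
      have : Real.exp (rhoMinus n lam gam sig al * t) < Real.exp (thetaMinus lam gam sig al * t) :=
        Real.exp_lt_exp.2 (mul_lt_mul_of_pos_right hrt ht)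
      exact mul_neg_of_pos_of_neg hxbar (by linarith)
    refine ⟨⟨fun h => absurd (h 1 one_pos) (by linarith [hXneg 1 one_pos]),
        fun h => absurd h (by linarith)⟩,
      ⟨fun _ => hc, fun _ => hXneg⟩,
      ⟨fun h => absurd (h 1 zero_le_one) (by linarith [hXneg 1 one_pos]),
        fun h => absurd h (by linarith)⟩, ?_⟩
    rw [Real.sign_of_neg (by linarith), Real.sign_of_neg (by linarith)]
  · -- no-trade case
    have hD : ((n:ℝ) + 1) * s - 2 * (n:ℝ) * gam - r = 0 := kEQ hc
    have hrt : rhoMinus n lam gam sig al = thetaMinus lam gam sig al := by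
      have : rhoMinus n lam gam sig al - thetaMinus lam gam sig al = 0 := by
        rw [hdiff, hD]; simp
      linarith
    have hX0 : ∀ t : ℝ, 0 ≤ t → XstarInf n lam gam sig al x i t = 0 := by
      intro t _
      rw [hX t, hrt]
      ring
    refine ⟨⟨fun h => absurd (h 1 one_pos) (by simp [hX0 1 zero_le_one]),
        fun h => absurd h (by linarith)⟩,
      ⟨fun h => absurd (h 1 one_pos) (by simp [hX0 1 zero_le_one]),
        fun h => absurd h (by linarith)⟩,
      ⟨fun _ => hc, fun _ => hX0⟩, ?_⟩
    rw [show rhoMinus n lam gam sig al - thetaMinus lam gam sig al = 0 by linarith,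
      show al * sig ^ 2 * lam - 2 * gam ^ 2 = 0 by linarith]
  · -- liquidity provision case
    have hD : 0 < ((n:ℝ) + 1) * s - 2 * (n:ℝ) * gam - r := kGT hc
    have hrt : thetaMinus lam gam sig al < rhoMinus n lam gam sig al := by
      have : 0 < rhoMinus n lam gam sig al - thetaMinus lam gam sig al := by
        rw [hdiff]; exact div_pos hD hden
      linarith
    have hXpos : ∀ t : ℝ, 0 < t → 0 < XstarInf n lam gam sig al x i t := by
      intro t ht
      rw [hX t]
      have : Real.exp (thetaMinus lam gam sig al * t) < Real.exp (rhoMinus n lam gam sig al * t) :=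
        Real.exp_lt_exp.2 (mul_lt_mul_of_pos_right hrt ht)
      exact mul_pos hxbar (by linarith)
    refine ⟨⟨fun _ => hc, fun _ => hXpos⟩,
      ⟨fun h => absurd (h 1 one_pos) (by linarith [hXpos 1 one_pos]),
        fun h => absurd h (by linarith)⟩,
      ⟨fun h => absurd (h 1 zero_le_one) (by linarith [hXpos 1 one_pos]),
        fun h => absurd h (by linarith)⟩, ?_⟩
    rw [Real.sign_of_pos (by linarith), Real.sign_of_pos (by linarith)]
end
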